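/- Let B be a unital C*-algebra and let u, v ∈ B be unitaries. Then the Loring element e = e(u,v) satisfies, writing f = f(u), g = g(u), h = h(u): e² = e + [[h v g + g v* h, f(hv) − (hv)f], [(v*h)f − f(v*h), v* h² v − h²]] (a 2×2 block matrix over B). In particular, if u and v commute, then e(u,v)² = e(u,v). -/

import Mathlib

/-!
Expanding `e²` entrywise, `e² - e` equals the displayed defect matrix plus terms that vanish
because `f(u), g(u), h(u)` commute, `g(u) h(u) = 0`, `f(u)² + g(u)² + h(u)² = f(u)` (the
pointwise identities transfer through the functional calculus, as the spectrum of `u` lies on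
the circle) and `v v* = 1`. If `u v = v u`, then `v` and `v* = v⁻¹` commute with `u` and
`u* = u⁻¹`, hence with every `φ(u)`, and each entry of the defect matrix is zero.
-/

open Complex

section LoringMatrix

variable {R : Type*} [Ring R]

-- `w` plays the role of `v*`.
def loringMatrix (f g h v w : R) : Matrix (Fin 2) (Fin 2) R :=
  !![f, g + h * v; w * h + g, 1 - f]

def loringDefect (f g h v w : R) : Matrix (Fin 2) (Fin 2) R :=
  !![h * v * g + g * w * h, f * (h * v) - (h * v) * f;
     (w * h) * f - f * (w * h), w * h * h * v - h * h]

variable {f g h v w : R}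

theorem loringMatrix_mul_self (hfg : Commute f g) (hgh : g * h = 0) (hhg : h * g = 0)
    (hsum : f * f + g * g + h * h = f) (hvw : v * w = 1) :
    loringMatrix f g h v w * loringMatrix f g h v w =
      loringMatrix f g h v w + loringDefect f g h v w := by
  have e00 : f * f + (g + h * v) * (w * h + g) = f + (h * v * g + g * w * h) := by
    rw [← sub_eq_zero]
    calc _ = (f * f + g * g + h * h - f) + h * (v * w - 1) * h := by noncomm_ring
      _ = 0 := by rw [hsum, hvw]; noncomm_ring
  have e01 : f * (g + h * v) + (g + h * v) * (1 - f) =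
      g + h * v + (f * (h * v) - h * v * f) := by
    rw [← sub_eq_zero]
    calc _ = f * g - g * f := by noncomm_ring
      _ = 0 := by rw [hfg.eq, sub_self]
  have e10 : (w * h + g) * f + (1 - f) * (w * h + g) =
      w * h + g + (w * h * f - f * (w * h)) := by
    rw [← sub_eq_zero]
    calc _ = g * f - f * g := by noncomm_ring
      _ = 0 := by rw [hfg.eq, sub_self]
  have e11 : (w * h + g) * (g + h * v) + (1 - f) * (1 - f) =
      1 - f + (w * h * h * v - h * h) := by
    rw [← sub_eq_zero]
    calc _ = (f * f + g * g + h * h - f) + w * (h * g) + (g * h) * v := by noncomm_ring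
      _ = 0 := by rw [hsum, hgh, hhg]; noncomm_ring
  simp only [loringMatrix, loringDefect, Matrix.mul_fin_two, Matrix.of_add_of,
    Matrix.cons_add_cons, Matrix.empty_add_empty]
  rw [e00, e01, e10, e11]

theorem loringDefect_eq_zero (hfh : Commute f h) (hgh : g * h = 0) (hhg : h * g = 0)
    (hvf : Commute v f) (hvg : Commute v g) (hvh : Commute v h)
    (hwf : Commute w f) (hwg : Commute w g) (hwv : w * v = 1) :
    loringDefect f g h v w = 0 := by
  have h00 : h * v * g + g * w * h = 0 := by
    rw [mul_assoc, hvg.eq, ← mul_assoc, hhg, ← hwg.eq, mul_assoc, hgh]; simp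
  have h01 : f * (h * v) = (h * v) * f := by
    rw [← mul_assoc, hfh.eq, mul_assoc, ← hvf.eq, mul_assoc]
  have h10 : (w * h) * f = f * (w * h) := by
    rw [mul_assoc, ← hfh.eq, ← mul_assoc, hwf.eq, mul_assoc]
  have h11 : w * h * h * v = h * h := by
    simp only [mul_assoc]
    rw [← mul_assoc h, ← (hvh.mul_right hvh).eq, ← mul_assoc, hwv, one_mul]
  rw [loringDefect, h00, h01, h10, h11, sub_self, sub_self, sub_self]
  exact (Matrix.eta_fin_two 0).symm

end LoringMatrix

theorem Commute.star_left_of_mem_unitary {R : Type*} [Monoid R] [StarMul R] {u x : R}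
    (hu : u ∈ unitary R) (h : Commute u x) : Commute (star u) x := by
  have h' : Commute (Unitary.toUnits ⟨u, hu⟩ : R) x := h
  simpa [← Unitary.star_eq_inv] using h'.units_inv_left

section CFC

variable {R A : Type*} {p : A → Prop} [CommSemiring R] [StarRing R] [MetricSpace R]
  [IsTopologicalSemiring R] [ContinuousStar R] [TopologicalSpace A] [Ring A] [StarRing A]
  [Algebra R A] [ContinuousFunctionalCalculus R A p] {φ ψ χ : R → R} {a : A}

theorem cfc_mul_cfc_eq_zero (hφ : ContinuousOn φ (spectrum R a))
    (hψ : ContinuousOn ψ (spectrum R a)) (h : (spectrum R a).EqOn (φ * ψ) 0) :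
    cfc φ a * cfc ψ a = 0 := by
  rw [← cfc_mul φ ψ a hφ hψ, ← cfc_zero R a]
  exact cfc_congr h

theorem cfc_mul_self_add_mul_self_add_mul_self (hφ : ContinuousOn φ (spectrum R a))
    (hψ : ContinuousOn ψ (spectrum R a)) (hχ : ContinuousOn χ (spectrum R a))
    (h : (spectrum R a).EqOn (fun x => φ x * φ x + ψ x * ψ x + χ x * χ x) φ) :
    cfc φ a * cfc φ a + cfc ψ a * cfc ψ a + cfc χ a * cfc χ a = cfc φ a := by
  rw [← cfc_mul φ φ a hφ hφ, ← cfc_mul ψ ψ a hψ hψ, ← cfc_mul χ χ a hχ hχ,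
    ← cfc_add a (fun x => φ x * φ x) (fun x => ψ x * ψ x) (hφ.mul hφ) (hψ.mul hψ),
    ← cfc_add a (fun x => φ x * φ x + ψ x * ψ x) (fun x => χ x * χ x)
      ((hφ.mul hφ).add (hψ.mul hψ)) (hχ.mul hχ)]
  exact cfc_congr h

end CFC

theorem loring_element_sq {B : Type*} [CStarAlgebra B]
    (f g h : ℂ → ℝ)
    (hf : ContinuousOn f (Metric.sphere (0 : ℂ) 1))
    (hg : ContinuousOn g (Metric.sphere (0 : ℂ) 1))
    (hh : ContinuousOn h (Metric.sphere (0 : ℂ) 1))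
    (hsum : ∀ z : ℂ, ‖z‖ = 1 → (f z) ^ 2 + (g z) ^ 2 + (h z) ^ 2 = f z)
    (hgh : ∀ z : ℂ, ‖z‖ = 1 → g z * h z = 0)
    (u v : B) (hu : u ∈ unitary B) (hv : v ∈ unitary B)
    (fu gu hu' : B)
    (hfu : fu = cfc (fun z : ℂ => (f z : ℂ)) u)
    (hgu : gu = cfc (fun z : ℂ => (g z : ℂ)) u)
    (hhu : hu' = cfc (fun z : ℂ => (h z : ℂ)) u)
    (e : Matrix (Fin 2) (Fin 2) B)
    (he : e = !![fu, gu + hu' * v; star v * hu' + gu, 1 - fu]) :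
    e * e = e +
      !![hu' * v * gu + gu * star v * hu',
           fu * (hu' * v) - (hu' * v) * fu;
         (star v * hu') * fu - fu * (star v * hu'),
           star v * hu' * hu' * v - hu' * hu'] ∧
    (u * v = v * u → e * e = e) := by
  have hspec : spectrum ℂ u ⊆ Metric.sphere 0 1 := spectrum.subset_circle_of_unitary hu
  have hnorm (z : ℂ) (hz : z ∈ spectrum ℂ u) : ‖z‖ = 1 := by simpa using hspec hz
  have hcont {φ : ℂ → ℝ} (hφ : ContinuousOn φ (Metric.sphere 0 1)) :
      ContinuousOn (fun z => (φ z : ℂ)) (spectrum ℂ u) :=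
    continuous_ofReal.comp_continuousOn (hφ.mono hspec)
  have hfg : Commute fu gu := hfu ▸ hgu ▸ cfc_commute_cfc _ _ u
  have hfh : Commute fu hu' := hfu ▸ hhu ▸ cfc_commute_cfc _ _ u
  have hgh0 : gu * hu' = 0 := hgu ▸ hhu ▸ cfc_mul_cfc_eq_zero (hcont hg) (hcont hh)
    fun z hz => by simp [← ofReal_mul, hgh z (hnorm z hz)]
  have hhg0 : hu' * gu = 0 := hgu ▸ hhu ▸ cfc_mul_cfc_eq_zero (hcont hh) (hcont hg)
    fun z hz => by simp [← ofReal_mul, mul_comm (h z), hgh z (hnorm z hz)]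
  have hsum' : fu * fu + gu * gu + hu' * hu' = fu := hfu ▸ hgu ▸ hhu ▸
    cfc_mul_self_add_mul_self_add_mul_self (hcont hf) (hcont hg) (hcont hh)
      fun z hz => by
        simpa only [sq, ← ofReal_mul, ← ofReal_add, ofReal_inj] using hsum z (hnorm z hz)
  have hsq := loringMatrix_mul_self hfg hgh0 hhg0 hsum' (Unitary.mul_star_self_of_mem hv)
  subst he
  refine ⟨hsq, fun huv => ?_⟩
  have hv_cfc (φ : ℂ → ℂ) : Commute v (cfc φ u) :=
    (Commute.cfc huv (Commute.star_left_of_mem_unitary hu huv) φ).symm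
  have hsv_cfc (φ : ℂ → ℂ) : Commute (star v) (cfc φ u) :=
    Commute.star_left_of_mem_unitary hv (hv_cfc φ)
  rw [loringDefect_eq_zero hfh hgh0 hhg0 (hfu ▸ hv_cfc _) (hgu ▸ hv_cfc _) (hhu ▸ hv_cfc _)
    (hfu ▸ hsv_cfc _) (hgu ▸ hsv_cfc _) (Unitary.star_mul_self_of_mem hv), add_zero] at hsq
  exact hsq
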